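/- No null pointer dereference: in any well-typed program, every dereference !l is safe: either l has the non-option pointer type τ* (in which case l is a non-null allocated location, since the typing rule for dereference forbids option types and locations of type τ* arise only from allocation), or l has type option(τ*) and the dereference occurs syntactically only inside the Some-branch of a match on l, where the matched variable is bound to a genuine (non-null) location; hence no evaluation of a well-typed program ever dereferences a null pointer. -/
import Mathlib


/-- Types of the BeePL core language. -/
inductive Ty : Type
  | int : Ty
  | bool : Ty
  | unit : Ty
  | ptr : Ty → Ty
  | opt : Ty → Ty
deriving DecidableEq

/-- Effects. -/
inductive Eff : Type
  | divergence | read | write | alloc | io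
deriving DecidableEq

/-- Expressions of the BeePL core language. -/
inductive Expr : Type
  | var : String → Expr
  | intC : Int → Expr
  | boolC : Bool → Expr
  | unitC : Expr
  | loc : Nat → Expr
  | ref : Expr → Expr
  | deref : Expr → Expr
  | assign : Expr → Expr → Expr
  | uop : Expr → Expr
  | bop : Expr → Expr → Expr
  | letin : String → Ty → Expr → Expr → Expr
  | cond : Expr → Expr → Expr → Expr
  | noneE : Expr
  | someE : Expr → Expr
  | matchE : Expr → Expr → String → Expr → Expr
deriving DecidableEq

/-- Substitution `e'[x := s]`; `let`/`match` bindings of the same name shadow. -/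
def subst (x : String) (s : Expr) : Expr → Expr
  | .var y => if y = x then s else .var y
  | .intC n => .intC n
  | .boolC b => .boolC b
  | .unitC => .unitC
  | .loc l => .loc l
  | .ref e => .ref (subst x s e)
  | .deref e => .deref (subst x s e)
  | .assign e1 e2 => .assign (subst x s e1) (subst x s e2)
  | .uop e => .uop (subst x s e)
  | .bop e1 e2 => .bop (subst x s e1) (subst x s e2)
  | .letin y τ e1 e2 => .letin y τ (subst x s e1) (if y = x then e2 else subst x s e2)
  | .cond e e1 e2 => .cond (subst x s e) (subst x s e1) (subst x s e2)
  | .noneE => .noneE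
  | .someE e => .someE (subst x s e)
  | .matchE m e1 y e2 => .matchE (subst x s m) (subst x s e1) y (if y = x then e2 else subst x s e2)

/-- Extend a typing context. -/
def updTC (Γ : String → Option Ty) (x : String) (τ : Ty) : String → Option Ty :=
  fun y => if y = x then some τ else Γ y

/-- Typing judgment `Γ; Σ ⊢ e : τ, η`. -/
inductive HasType : (String → Option Ty) → (Nat → Option Ty) → Expr → Ty → List Eff → Prop
  | var {Γ St x τ} : Γ x = some τ → HasType Γ St (.var x) τ []
  | intC {Γ St n} : HasType Γ St (.intC n) .int []
  | boolC {Γ St b} : HasType Γ St (.boolC b) .bool []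
  | unitC {Γ St} : HasType Γ St .unitC .unit []
  | loc {Γ St l τ} : St l = some τ → HasType Γ St (.loc l) (.ptr τ) []
  | ref {Γ St e τ η} : HasType Γ St e τ η →
      HasType Γ St (.ref e) (.ptr τ) (.alloc :: η)
  | deref {Γ St e τ η} : HasType Γ St e (.ptr τ) η →
      HasType Γ St (.deref e) τ (.read :: η)
  | assign {Γ St e1 e2 τ η1 η2} : HasType Γ St e1 (.ptr τ) η1 → HasType Γ St e2 τ η2 →
      HasType Γ St (.assign e1 e2) .unit (η1 ++ η2 ++ [.write])
  | uop {Γ St e η} : HasType Γ St e .int η → HasType Γ St (.uop e) .int η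
  | bop {Γ St e1 e2 η1 η2} : HasType Γ St e1 .int η1 → HasType Γ St e2 .int η2 →
      HasType Γ St (.bop e1 e2) .int (η1 ++ η2)
  | letin {Γ St x τ1 τ2 e1 e2 η1 η2} : HasType Γ St e1 τ1 η1 →
      HasType (updTC Γ x τ1) St e2 τ2 η2 →
      HasType Γ St (.letin x τ1 e1 e2) τ2 (η1 ++ η2)
  | cond {Γ St e e1 e2 τ η η1 η2} : HasType Γ St e .bool η → HasType Γ St e1 τ η1 →
      HasType Γ St e2 τ η2 → HasType Γ St (.cond e e1 e2) τ (η ++ η1 ++ η2)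
  | noneE {Γ St τ} : HasType Γ St .noneE (.opt (.ptr τ)) []
  | someE {Γ St e τ η} : HasType Γ St e (.ptr τ) η →
      HasType Γ St (.someE e) (.opt (.ptr τ)) η
  | matchE {Γ St m e1 x e2 τm τ ηm η1 η2} : HasType Γ St m (.opt (.ptr τm)) ηm →
      HasType Γ St e1 τ η1 → HasType (updTC Γ x (.ptr τm)) St e2 τ η2 →
      HasType Γ St (.matchE m e1 x e2) τ (ηm ++ η1 ++ η2)

/-- Values. -/
inductive IsVal : Expr → Prop
  | intC {n} : IsVal (.intC n)
  | boolC {b} : IsVal (.boolC b)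
  | unitC : IsVal .unitC
  | loc {l} : IsVal (.loc l)
  | noneE : IsVal .noneE
  | someE {v} : IsVal v → IsVal (.someE v)

/-- Program states: global environment Δ, variable environment Ω, memory Θ. -/
structure State where
  glob : String → Option Nat
  env : String → Option (Nat × Ty)
  mem : Nat → Option Expr

/-- Update the memory of a state. -/
def setMem (s : State) (l : Nat) (v : Expr) : State :=
  { s with mem := fun l' => if l' = l then some v else s.mem l' }

/-- Well-formedness of a state with respect to Γ and Σ. -/
def WFState (Γ : String → Option Ty) (St : Nat → Option Ty) (s : State) : Prop :=
  (∀ x τ, Γ x = some τ →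
      ∃ l, (s.env x = some (l, τ) ∨ (s.env x = none ∧ s.glob x = some l)) ∧
        St l = some τ) ∧
  (∀ l τ, St l = some τ → ∃ v, s.mem l = some v ∧ IsVal v ∧ HasType Γ St v τ []) ∧
  (∀ l v, s.mem l = some v → ∃ τ, St l = some τ)

/-- Small-step operational semantics, call-by-value, left-to-right. -/
inductive Step : State → Expr → State → Expr → Prop
  | varLocal {s x l τ v} : s.env x = some (l, τ) → s.mem l = some v →
      Step s (.var x) s v
  | varGlobal {s x l v} : s.env x = none → s.glob x = some l → s.mem l = some v →
      Step s (.var x) s v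
  | refCtx {s s' e e'} : Step s e s' e' → Step s (.ref e) s' (.ref e')
  | refVal {s v l} : IsVal v → s.mem l = none →
      Step s (.ref v) (setMem s l v) (.loc l)
  | derefCtx {s s' e e'} : Step s e s' e' → Step s (.deref e) s' (.deref e')
  | derefVal {s l v} : s.mem l = some v → Step s (.deref (.loc l)) s v
  | assignCtx1 {s s' e1 e1' e2} : Step s e1 s' e1' →
      Step s (.assign e1 e2) s' (.assign e1' e2)
  | assignCtx2 {s s' v e2 e2'} : IsVal v → Step s e2 s' e2' →
      Step s (.assign v e2) s' (.assign v e2')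
  | assignVal {s l v w} : IsVal v → s.mem l = some w →
      Step s (.assign (.loc l) v) (setMem s l v) .unitC
  | uopCtx {s s' e e'} : Step s e s' e' → Step s (.uop e) s' (.uop e')
  | uopVal {s n} : Step s (.uop (.intC n)) s (.intC (-n))
  | bopCtx1 {s s' e1 e1' e2} : Step s e1 s' e1' →
      Step s (.bop e1 e2) s' (.bop e1' e2)
  | bopCtx2 {s s' v e2 e2'} : IsVal v → Step s e2 s' e2' →
      Step s (.bop v e2) s' (.bop v e2')
  | bopVal {s n1 n2} : Step s (.bop (.intC n1) (.intC n2)) s (.intC (n1 + n2))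
  | letCtx {s s' x τ e1 e1' e2} : Step s e1 s' e1' →
      Step s (.letin x τ e1 e2) s' (.letin x τ e1' e2)
  | letVal {s x τ v e2} : IsVal v → Step s (.letin x τ v e2) s (subst x v e2)
  | condCtx {s s' e e' e1 e2} : Step s e s' e' →
      Step s (.cond e e1 e2) s' (.cond e' e1 e2)
  | condT {s e1 e2} : Step s (.cond (.boolC true) e1 e2) s e1
  | condF {s e1 e2} : Step s (.cond (.boolC false) e1 e2) s e2
  | someCtx {s s' e e'} : Step s e s' e' → Step s (.someE e) s' (.someE e')
  | matchCtx {s s' m m' e1 x e2} : Step s m s' m' →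
      Step s (.matchE m e1 x e2) s' (.matchE m' e1 x e2)
  | matchNone {s e1 x e2} : Step s (.matchE .noneE e1 x e2) s e1
  | matchSome {s v e1 x e2} : IsVal v →
      Step s (.matchE (.someE v) e1 x e2) s (subst x v e2)

/-- Multi-step evaluation counting the number of steps. -/
inductive Steps : State → Expr → State → Expr → Nat → Prop
  | refl {s e} : Steps s e s e 0
  | tail {s e s' e' s'' e'' n} : Steps s e s' e' n → Step s' e' s'' e'' →
      Steps s e s'' e'' (n + 1)

/-- An expression is irreducible in a state if no step is possible. -/
def StuckExpr (s : State) (e : Expr) : Prop := ¬ ∃ s' e', Step s e s' e'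

/-- `ECtxAt r e`: the redex `r` sits in evaluation position inside `e`
(i.e. it is the subterm about to be reduced). -/
inductive ECtxAt : Expr → Expr → Prop
  | here {r} : ECtxAt r r
  | ref {r e} : ECtxAt r e → ECtxAt r (.ref e)
  | deref {r e} : ECtxAt r e → ECtxAt r (.deref e)
  | assign1 {r e1 e2} : ECtxAt r e1 → ECtxAt r (.assign e1 e2)
  | assign2 {r v e2} : IsVal v → ECtxAt r e2 → ECtxAt r (.assign v e2)
  | uop {r e} : ECtxAt r e → ECtxAt r (.uop e)
  | bop1 {r e1 e2} : ECtxAt r e1 → ECtxAt r (.bop e1 e2)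
  | bop2 {r v e2} : IsVal v → ECtxAt r e2 → ECtxAt r (.bop v e2)
  | letin {r x τ e1 e2} : ECtxAt r e1 → ECtxAt r (.letin x τ e1 e2)
  | cond {r e e1 e2} : ECtxAt r e → ECtxAt r (.cond e e1 e2)
  | someE {r e} : ECtxAt r e → ECtxAt r (.someE e)
  | matchE {r m e1 x e2} : ECtxAt r m → ECtxAt r (.matchE m e1 x e2)

/-- Store typing extension. -/
def StExt (St St' : Nat → Option Ty) : Prop := ∀ l τ, St l = some τ → St' l = some τ

lemma StExt.refl (St : Nat → Option Ty) : StExt St St := fun _ _ h => h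

lemma StExt.trans {St1 St2 St3} (h1 : StExt St1 St2) (h2 : StExt St2 St3) :
    StExt St1 St3 := fun l τ h => h2 l τ (h1 l τ h)

lemma hasType_stext' : ∀ {Γ St e τ η}, HasType Γ St e τ η →
    ∀ St', StExt St St' → HasType Γ St' e τ η := by
  intro Γ St e τ η ht
  induction ht with
  | var h' => intro St' hext; exact .var h'
  | intC => intro St' hext; exact .intC
  | boolC => intro St' hext; exact .boolC
  | unitC => intro St' hext; exact .unitC
  | loc h' => intro St' hext; exact .loc (hext _ _ h')
  | ref _ ih => intro St' hext; exact .ref (ih St' hext)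
  | deref _ ih => intro St' hext; exact .deref (ih St' hext)
  | assign _ _ ih1 ih2 => intro St' hext; exact .assign (ih1 St' hext) (ih2 St' hext)
  | uop _ ih => intro St' hext; exact .uop (ih St' hext)
  | bop _ _ ih1 ih2 => intro St' hext; exact .bop (ih1 St' hext) (ih2 St' hext)
  | letin _ _ ih1 ih2 => intro St' hext; exact .letin (ih1 St' hext) (ih2 St' hext)
  | cond _ _ _ ih ih1 ih2 =>
      intro St' hext; exact .cond (ih St' hext) (ih1 St' hext) (ih2 St' hext)
  | noneE => intro St' hext; exact .noneE
  | someE _ ih => intro St' hext; exact .someE (ih St' hext)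
  | matchE _ _ _ ihm ih1 ih2 =>
      intro St' hext; exact .matchE (ihm St' hext) (ih1 St' hext) (ih2 St' hext)

lemma hasType_stext {St St'} (hext : StExt St St') {Γ e τ η}
    (ht : HasType Γ St e τ η) : HasType Γ St' e τ η :=
  hasType_stext' ht St' hext

/-- A value's typing is independent of the variable context and has no effects. -/
lemma val_any {v} (hv : IsVal v) :
    ∀ {Γ St τ η}, HasType Γ St v τ η → ∀ Γ', HasType Γ' St v τ [] := by
  induction hv with
  | intC => intro Γ St τ η ht Γ'; cases ht; exact .intC
  | boolC => intro Γ St τ η ht Γ'; cases ht; exact .boolC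
  | unitC => intro Γ St τ η ht Γ'; cases ht; exact .unitC
  | loc => intro Γ St τ η ht Γ'; cases ht with | loc h => exact .loc h
  | noneE => intro Γ St τ η ht Γ'; cases ht; exact .noneE
  | someE _ ih =>
      intro Γ St τ η ht Γ'
      cases ht with | someE h => exact .someE (ih h Γ')

lemma updTC_shadow (Γ : String → Option Ty) (x τ1 τ2) :
    updTC (updTC Γ x τ1) x τ2 = updTC Γ x τ2 := by
  funext y; by_cases h : y = x <;> simp [updTC, h]

lemma updTC_comm (Γ : String → Option Ty) {x y} (h : y ≠ x) (τ1 τ2) :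
    updTC (updTC Γ x τ1) y τ2 = updTC (updTC Γ y τ2) x τ1 := by
  funext z
  by_cases h1 : z = y <;> by_cases h2 : z = x <;>
    simp_all [updTC]

/-- Substitution lemma. -/
lemma subst_lemma' : ∀ {Δ St e τ η}, HasType Δ St e τ η →
    ∀ {v τ1} Γ x, Δ = updTC Γ x τ1 → (∀ Γ'', HasType Γ'' St v τ1 []) →
      HasType Γ St (subst x v e) τ η := by
  intro Δ St e τ η ht
  induction ht with
  | @var _ _ y τ hy =>
      intro v τ1 Γ x hΔ hv; subst hΔ
      by_cases h : y = x
      · subst h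
        have : some τ1 = some τ := by simpa [updTC] using hy
        cases this
        simpa [subst] using hv Γ
      · have : Γ y = some τ := by simpa [updTC, h] using hy
        simpa [subst, h] using HasType.var this
  | intC => intro v τ1 Γ x hΔ hv; exact .intC
  | boolC => intro v τ1 Γ x hΔ hv; exact .boolC
  | unitC => intro v τ1 Γ x hΔ hv; exact .unitC
  | loc h => intro v τ1 Γ x hΔ hv; exact .loc h
  | ref _ ih => intro v τ1 Γ x hΔ hv; exact .ref (ih Γ x hΔ hv)
  | deref _ ih => intro v τ1 Γ x hΔ hv; exact .deref (ih Γ x hΔ hv)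
  | assign _ _ ih1 ih2 => intro v τ1 Γ x hΔ hv; exact .assign (ih1 Γ x hΔ hv) (ih2 Γ x hΔ hv)
  | uop _ ih => intro v τ1 Γ x hΔ hv; exact .uop (ih Γ x hΔ hv)
  | bop _ _ ih1 ih2 => intro v τ1 Γ x hΔ hv; exact .bop (ih1 Γ x hΔ hv) (ih2 Γ x hΔ hv)
  | @letin _ _ y τa τb e1 e2 η1 η2 h1 h2 ih1 ih2 =>
      intro v τ1 Γ x hΔ hv; subst hΔ
      by_cases h : y = x
      · subst h
        simp only [subst, if_pos rfl]
        refine .letin (ih1 Γ y rfl hv) ?_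
        rw [updTC_shadow] at h2
        exact h2
      · simp only [subst, if_neg h]
        refine .letin (ih1 Γ x rfl hv) ?_
        exact ih2 (updTC Γ y τa) x (updTC_comm Γ h τ1 τa) hv
  | cond _ _ _ ih ih1 ih2 =>
      intro v τ1 Γ x hΔ hv; exact .cond (ih Γ x hΔ hv) (ih1 Γ x hΔ hv) (ih2 Γ x hΔ hv)
  | noneE => intro v τ1 Γ x hΔ hv; exact .noneE
  | someE _ ih => intro v τ1 Γ x hΔ hv; exact .someE (ih Γ x hΔ hv)
  | @matchE _ _ m e1 y e2 τm τ' ηm η1 η2 hm h1 h2 ihm ih1 ih2 =>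
      intro v τ1 Γ x hΔ hv; subst hΔ
      by_cases h : y = x
      · subst h
        simp only [subst, if_pos rfl]
        refine .matchE (ihm Γ y rfl hv) (ih1 Γ y rfl hv) ?_
        rw [updTC_shadow] at h2
        exact h2
      · simp only [subst, if_neg h]
        refine .matchE (ihm Γ x rfl hv) (ih1 Γ x rfl hv) ?_
        exact ih2 (updTC Γ y (.ptr τm)) x (updTC_comm Γ h τ1 (.ptr τm)) hv

lemma subst_lemma {St v τ1} (hv : ∀ Γ'', HasType Γ'' St v τ1 [])
    {Γ e τ η x} (ht : HasType (updTC Γ x τ1) St e τ η) :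
    HasType Γ St (subst x v e) τ η :=
  subst_lemma' ht Γ x rfl hv

/-- Single-step preservation (with store typing extension and WF preservation). -/
lemma preservation {Γ St s e s' e'} (hs : Step s e s' e') :
    ∀ {τ η}, HasType Γ St e τ η → WFState Γ St s →
      ∃ St', StExt St St' ∧ WFState Γ St' s' ∧ ∃ η', HasType Γ St' e' τ η' := by
  induction hs with
  | @varLocal x l τl v henv hmem =>
      intro τ η ht hwf
      cases ht with
      | var hx =>
        obtain ⟨h1, h2, h3⟩ := hwf
        obtain ⟨l0, hd, hSt⟩ := h1 x τ hx
        rcases hd with hd | ⟨hd, _⟩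
        · rw [henv] at hd
          cases hd
          obtain ⟨v0, hm0, _, htv0⟩ := h2 _ _ hSt
          rw [hmem] at hm0; cases hm0
          exact ⟨St, StExt.refl St, ⟨h1, h2, h3⟩, [], htv0⟩
        · rw [henv] at hd; cases hd
  | @varGlobal x l v henv hglob hmem =>
      intro τ η ht hwf
      cases ht with
      | var hx =>
        obtain ⟨h1, h2, h3⟩ := hwf
        obtain ⟨l0, hd, hSt⟩ := h1 x τ hx
        rcases hd with hd | ⟨_, hd⟩
        · rw [henv] at hd; cases hd
        · rw [hglob] at hd; cases hd
          obtain ⟨v0, hm0, _, htv0⟩ := h2 _ _ hSt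
          rw [hmem] at hm0; cases hm0
          exact ⟨St, StExt.refl St, ⟨h1, h2, h3⟩, [], htv0⟩
  | refCtx _ ih =>
      intro τ η ht hwf
      cases ht with
      | ref h =>
        obtain ⟨St', hext, hwf', η', ht'⟩ := ih h hwf
        exact ⟨St', hext, hwf', _, .ref ht'⟩
  | @refVal v l hv hmem =>
      intro τ η ht hwf
      cases ht with
      | @ref _ _ _ τ0 _ h =>
        obtain ⟨h1, h2, h3⟩ := hwf
        have hStl : St l = none := by
          cases hSl : St l with
          | none => rfl
          | some τ'' =>
            obtain ⟨v0, hm0, _⟩ := h2 _ _ hSl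
            rw [hmem] at hm0; cases hm0
        refine ⟨fun l' => if l' = l then some τ0 else St l', ?_, ?_, [], ?_⟩
        · intro l' τ' h'
          by_cases hl : l' = l
          · subst hl; rw [hStl] at h'; cases h'
          · simpa [hl] using h'
        · have hext : StExt St (fun l' => if l' = l then some τ0 else St l') := by
            intro l' τ' h'
            by_cases hl : l' = l
            · subst hl; rw [hStl] at h'; cases h'
            · simpa [hl] using h'
          refine ⟨?_, ?_, ?_⟩
          · intro x τx hx
            obtain ⟨l0, hd, hSt⟩ := h1 x τx hx
            exact ⟨l0, hd, hext _ _ hSt⟩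
          · intro l' τ' h'
            by_cases hl : l' = l
            · subst hl
              simp only [if_pos rfl] at h'
              cases h'
              exact ⟨v, by simp [setMem], hv, val_any hv (hasType_stext hext h) Γ⟩
            · simp only [if_neg hl] at h'
              obtain ⟨v0, hm0, hv0, htv0⟩ := h2 _ _ h'
              exact ⟨v0, by simp [setMem, hl, hm0], hv0, hasType_stext hext htv0⟩
          · intro l' v' h'
            by_cases hl : l' = l
            · exact ⟨τ0, by simp [hl]⟩
            · simp only [setMem, if_neg hl] at h'
              obtain ⟨τ', hτ'⟩ := h3 _ _ h'
              exact ⟨τ', by simp [hl, hτ']⟩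
        · exact .loc (by simp)
  | derefCtx _ ih =>
      intro τ η ht hwf
      cases ht with
      | deref h =>
        obtain ⟨St', hext, hwf', η', ht'⟩ := ih h hwf
        exact ⟨St', hext, hwf', _, .deref ht'⟩
  | @derefVal l v hmem =>
      intro τ η ht hwf
      cases ht with
      | deref h =>
        cases h with
        | loc hSl =>
          obtain ⟨h1, h2, h3⟩ := hwf
          obtain ⟨v0, hm0, _, htv0⟩ := h2 _ _ hSl
          rw [hmem] at hm0; cases hm0
          exact ⟨St, StExt.refl St, ⟨h1, h2, h3⟩, [], htv0⟩
  | assignCtx1 _ ih =>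
      intro τ η ht hwf
      cases ht with
      | assign hA hB =>
        obtain ⟨St', hext, hwf', η', ht'⟩ := ih hA hwf
        exact ⟨St', hext, hwf', _, .assign ht' (hasType_stext hext hB)⟩
  | assignCtx2 hv _ ih =>
      intro τ η ht hwf
      cases ht with
      | assign hA hB =>
        obtain ⟨St', hext, hwf', η', ht'⟩ := ih hB hwf
        exact ⟨St', hext, hwf', _, .assign (hasType_stext hext hA) ht'⟩
  | @assignVal l v w hv hmem =>
      intro τ η ht hwf
      cases ht with
      | assign hA hB =>
        cases hA with
        | loc hSl =>
          obtain ⟨h1, h2, h3⟩ := hwf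
          refine ⟨St, StExt.refl St, ⟨?_, ?_, ?_⟩, [], .unitC⟩
          · exact h1
          · intro l' τ' h'
            by_cases hl : l' = l
            · subst hl
              rw [hSl] at h'; cases h'
              exact ⟨v, by simp [setMem], hv, val_any hv hB Γ⟩
            · obtain ⟨v0, hm0, hv0, htv0⟩ := h2 _ _ h'
              exact ⟨v0, by simp [setMem, hl, hm0], hv0, htv0⟩
          · intro l' v' h'
            by_cases hl : l' = l
            · subst hl; exact ⟨_, hSl⟩
            · simp only [setMem, if_neg hl] at h'
              exact h3 _ _ h'
  | uopCtx _ ih =>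
      intro τ η ht hwf
      cases ht with
      | uop h =>
        obtain ⟨St', hext, hwf', η', ht'⟩ := ih h hwf
        exact ⟨St', hext, hwf', _, .uop ht'⟩
  | uopVal =>
      intro τ η ht hwf
      cases ht with
      | uop h => exact ⟨St, StExt.refl St, hwf, [], .intC⟩
  | bopCtx1 _ ih =>
      intro τ η ht hwf
      cases ht with
      | bop hA hB =>
        obtain ⟨St', hext, hwf', η', ht'⟩ := ih hA hwf
        exact ⟨St', hext, hwf', _, .bop ht' (hasType_stext hext hB)⟩
  | bopCtx2 hv _ ih =>
      intro τ η ht hwf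
      cases ht with
      | bop hA hB =>
        obtain ⟨St', hext, hwf', η', ht'⟩ := ih hB hwf
        exact ⟨St', hext, hwf', _, .bop (hasType_stext hext hA) ht'⟩
  | bopVal =>
      intro τ η ht hwf
      cases ht; exact ⟨St, StExt.refl St, hwf, [], .intC⟩
  | letCtx _ ih =>
      intro τ η ht hwf
      cases ht with
      | letin hA hB =>
        obtain ⟨St', hext, hwf', η', ht'⟩ := ih hA hwf
        exact ⟨St', hext, hwf', _, .letin ht' (hasType_stext hext hB)⟩
  | @letVal x τx v e2 hv =>
      intro τ η ht hwf
      cases ht with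
      | letin hA hB =>
        exact ⟨St, StExt.refl St, hwf, _,
          subst_lemma (fun Γ'' => val_any hv hA Γ'') hB⟩
  | condCtx _ ih =>
      intro τ η ht hwf
      cases ht with
      | cond h h1 h2 =>
        obtain ⟨St', hext, hwf', η', ht'⟩ := ih h hwf
        exact ⟨St', hext, hwf', _,
          .cond ht' (hasType_stext hext h1) (hasType_stext hext h2)⟩
  | condT =>
      intro τ η ht hwf
      cases ht with
      | cond h h1 h2 => exact ⟨St, StExt.refl St, hwf, _, h1⟩
  | condF =>
      intro τ η ht hwf
      cases ht with
      | cond h h1 h2 => exact ⟨St, StExt.refl St, hwf, _, h2⟩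
  | someCtx _ ih =>
      intro τ η ht hwf
      cases ht with
      | someE h =>
        obtain ⟨St', hext, hwf', η', ht'⟩ := ih h hwf
        exact ⟨St', hext, hwf', _, .someE ht'⟩
  | matchCtx _ ih =>
      intro τ η ht hwf
      cases ht with
      | matchE hm h1 h2 =>
        obtain ⟨St', hext, hwf', η', ht'⟩ := ih hm hwf
        exact ⟨St', hext, hwf', _,
          .matchE ht' (hasType_stext hext h1) (hasType_stext hext h2)⟩
  | matchNone =>
      intro τ η ht hwf
      cases ht with
      | matchE hm h1 h2 => exact ⟨St, StExt.refl St, hwf, _, h1⟩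
  | @matchSome v e1 x e2 hv =>
      intro τ η ht hwf
      cases ht with
      | matchE hm h1 h2 =>
        cases hm with
        | someE hvt =>
          exact ⟨St, StExt.refl St, hwf, _,
            subst_lemma (fun Γ'' => val_any hv hvt Γ'') h2⟩

/-- Multi-step preservation. -/
lemma preservation_star {Γ St s e s' e' n} (hs : Steps s e s' e' n) :
    ∀ {τ η}, HasType Γ St e τ η → WFState Γ St s →
      ∃ St', StExt St St' ∧ WFState Γ St' s' ∧ ∃ η', HasType Γ St' e' τ η' := by
  induction hs with
  | refl => intro τ η ht hwf; exact ⟨St, StExt.refl St, hwf, _, ht⟩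
  | tail _ hstep ih =>
      intro τ η ht hwf
      obtain ⟨St1, hext1, hwf1, η1, ht1⟩ := ih ht hwf
      obtain ⟨St2, hext2, hwf2, η2, ht2⟩ := preservation hstep ht1 hwf1
      exact ⟨St2, hext1.trans hext2, hwf2, η2, ht2⟩

/-- A redex in evaluation position in a well-typed term is well-typed. -/
lemma ectx_type {r e} (hc : ECtxAt r e) :
    ∀ {Γ St τ η}, HasType Γ St e τ η → ∃ τ' η', HasType Γ St r τ' η' := by
  induction hc with
  | here => intro Γ St τ η ht; exact ⟨_, _, ht⟩
  | ref _ ih => intro Γ St τ η ht; cases ht with | ref h => exact ih h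
  | deref _ ih => intro Γ St τ η ht; cases ht with | deref h => exact ih h
  | assign1 _ ih => intro Γ St τ η ht; cases ht with | assign h1 h2 => exact ih h1
  | assign2 _ _ ih => intro Γ St τ η ht; cases ht with | assign h1 h2 => exact ih h2
  | uop _ ih => intro Γ St τ η ht; cases ht with | uop h => exact ih h
  | bop1 _ ih => intro Γ St τ η ht; cases ht with | bop h1 h2 => exact ih h1
  | bop2 _ _ ih => intro Γ St τ η ht; cases ht with | bop h1 h2 => exact ih h2
  | letin _ ih => intro Γ St τ η ht; cases ht with | letin h1 h2 => exact ih h1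
  | cond _ ih => intro Γ St τ η ht; cases ht with | cond h h1 h2 => exact ih h
  | someE _ ih => intro Γ St τ η ht; cases ht with | someE h => exact ih h
  | matchE _ ih => intro Γ St τ η ht; cases ht with | matchE hm h1 h2 => exact ih hm

/-- Canonical forms: a value of pointer type is a location. -/
lemma canonical_ptr {w Γ St τ η} (hv : IsVal w) (ht : HasType Γ St w (.ptr τ) η) :
    ∃ l, w = Expr.loc l ∧ St l = some τ := by
  cases hv with
  | intC => cases ht
  | boolC => cases ht
  | unitC => cases ht
  | loc => cases ht with | loc h => exact ⟨_, rfl, h⟩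
  | noneE => cases ht
  | someE _ => cases ht
/-- no null pointer dereference.  In any reduction sequence of
a well-typed program starting from a well-formed state, whenever a dereference
`!w` of a fully evaluated pointer `w` is about to be performed, `w` is a
genuine (non-null) location that is allocated and initialized in memory:
option-typed (possibly null) pointers can only be dereferenced after a
`match` has eliminated the `None` case. -/
theorem no_null_pointer_dereference
    (Γ : String → Option Ty) (St : Nat → Option Ty)
    (e e' : Expr) (τ : Ty) (η : List Eff) (s s' : State) (n : Nat) (w : Expr)
    (ht : HasType Γ St e τ η) (hwf : WFState Γ St s)
    (hsteps : Steps s e s' e' n)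
    (hval : IsVal w) (hpos : ECtxAt (.deref w) e') :
    ∃ l : Nat, w = Expr.loc l ∧ ∃ v, s'.mem l = some v := by
  obtain ⟨St', hext, hwf', η', ht'⟩ := preservation_star hsteps ht hwf
  obtain ⟨τ', η'', htd⟩ := ectx_type hpos ht'
  cases htd with
  | deref hw =>
    obtain ⟨l, rfl, hSl⟩ := canonical_ptr hval hw
    obtain ⟨_, h2, _⟩ := hwf'
    obtain ⟨v, hm, _, _⟩ := h2 _ _ hSl
    exact ⟨l, rfl, v, hm⟩
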